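/- arXiv:2210.02211 — 3 statements merged into one kernel-verified Lean document; each statement's English description precedes it below -/
import Mathlib

section
/- Let Y(t) be the fundamental solution (Y(0)=I) of ẏ = A(t)·y where A is continuous, p-periodic (A(t+p) = A(t)), and satisfies h·A(t) = A(t+θ)·h for an orthogonal matrix h, where θ = (m/n)·p for integers 1 ≤ m ≤ n. Define the twisted monodromy matrix Y_h = h⁻¹·Y(θ). Then the monodromy matrix satisfies Y(p)^m = h^n · Y_h^n. -/
/-!
A fundamental solution `Y` of `Y' = A Y` is determined by `Y 0 = 1`, so any other solution `Z` of
the same equation is `Z t = Y t * Z 0`. If `h A(t) = A(t + θ) h`, then `t ↦ h⁻¹ Y(t + θ)` solves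
`Y' = A Y` again, whence `Y(t + θ) = h Y(t) Y_h` with `Y_h = h⁻¹ Y(θ)`; periodicity is the case
`h = 1`, `θ = p`. Iterating, `Y(p)^m = Y(m p) = Y(n θ) = h^n Y_h^n`.
-/

open Set

theorem linear_ODE_solution_unique {E : Type*} [NormedAddCommGroup E] [NormedSpace ℝ E]
    {B : ℝ → E →L[ℝ] E} (hB : Continuous B) {f g : ℝ → E}
    (hf : ∀ t, HasDerivAt f (B t (f t)) t) (hg : ∀ t, HasDerivAt g (B t (g t)) t)
    {t₀ : ℝ} (h₀ : f t₀ = g t₀) : f = g := by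
  funext t
  obtain ⟨a, b, ht, ht₀⟩ : ∃ a b, t ∈ Ioo a b ∧ t₀ ∈ Ioo a b :=
    ⟨min t t₀ - 1, max t t₀ + 1, by grind⟩
  -- `B` need not be globally bounded, so work on a compact interval where it is.
  obtain ⟨C, hC⟩ := isCompact_Icc.exists_bound_of_continuousOn (hB.continuousOn (s := Icc a b))
  have hLip : ∀ s ∈ Ioo a b, LipschitzOnWith C.toNNReal (B s) univ := fun s hs =>
    ((B s).lipschitz.weaken (by
      rw [← NNReal.coe_le_coe, coe_nnnorm]
      exact (hC s (Ioo_subset_Icc_self hs)).trans (Real.le_coe_toNNReal C))).lipschitzOnWith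
  exact ODE_solution_unique_of_mem_Ioo hLip ht₀ (fun s _ => ⟨hf s, trivial⟩)
    (fun s _ => ⟨hg s, trivial⟩) h₀ ht

theorem map_natCast_mul_eq_pow_mul_pow {M : Type*} [Monoid M] {f : ℝ → M} (hf₀ : f 0 = 1)
    {c : ℝ} {a b : M} (hf : ∀ t, f (t + c) = a * f t * b) (k : ℕ) :
    f (k * c) = a ^ k * b ^ k := by
  induction k with
  | zero => simp [hf₀]
  | succ k ih => rw [Nat.cast_succ, add_one_mul, hf, ih, pow_succ' a, pow_succ b, mul_assoc,
      mul_assoc, mul_assoc]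

theorem map_natCast_mul_eq_pow {M : Type*} [Monoid M] {f : ℝ → M} (hf₀ : f 0 = 1) {c : ℝ} {b : M}
    (hf : ∀ t, f (t + c) = f t * b) (k : ℕ) : f (k * c) = b ^ k := by
  simpa using map_natCast_mul_eq_pow_mul_pow hf₀ (a := 1) (by simpa using hf) k

section FundamentalSolution

variable {R : Type*} [NormedRing R] [NormedAlgebra ℝ R]

def IsFundamentalSolution (A Y : ℝ → R) : Prop :=
  Y 0 = 1 ∧ ∀ t, HasDerivAt Y (A t * Y t) t

namespace IsFundamentalSolution

variable {A Y : ℝ → R}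

theorem eq_mul_apply_zero (hY : IsFundamentalSolution A Y) (hA : Continuous A) {Z : ℝ → R}
    (hZ : ∀ t, HasDerivAt Z (A t * Z t) t) (t : ℝ) : Z t = Y t * Z 0 := by
  have hYZ : ∀ t, HasDerivAt (fun s => Y s * Z 0) (A t * (Y t * Z 0)) t := fun t => by
    simpa only [mul_assoc] using (hY.2 t).mul_const (Z 0)
  refine congrFun (linear_ODE_solution_unique (B := fun t => ContinuousLinearMap.mul ℝ R (A t))
    ((ContinuousLinearMap.mul ℝ R).continuous.comp hA) hZ hYZ (t₀ := 0) ?_) t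
  simp [hY.1]

theorem map_add_eq_mul_mul (hY : IsFundamentalSolution A Y) (hA : Continuous A) (h : Rˣ)
    {θ : ℝ} (hsym : ∀ t, ↑h * A t = A (t + θ) * ↑h) (t : ℝ) :
    Y (t + θ) = ↑h * Y t * (↑h⁻¹ * Y θ) := by
  have hconj : ∀ t, ↑h⁻¹ * A (t + θ) = A t * ↑h⁻¹ := fun t => by
    rw [Units.inv_mul_eq_iff_eq_mul, ← mul_assoc, hsym, mul_assoc, Units.mul_inv, mul_one]
  have hZ : ∀ t, HasDerivAt (fun s => ↑h⁻¹ * Y (s + θ)) (A t * (↑h⁻¹ * Y (t + θ))) t :=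
    fun t => by
      simpa only [← mul_assoc, hconj] using ((hY.2 (t + θ)).comp_add_const t θ).const_mul ↑h⁻¹
  have hshift : ↑h⁻¹ * Y (t + θ) = Y t * (↑h⁻¹ * Y θ) := by
    simpa only [zero_add] using hY.eq_mul_apply_zero hA hZ t
  rw [mul_assoc, ← hshift, ← mul_assoc, Units.mul_inv, one_mul]

theorem map_add_period (hY : IsFundamentalSolution A Y) (hA : Continuous A) {p : ℝ}
    (hper : ∀ t, A (t + p) = A t) (t : ℝ) : Y (t + p) = Y t * Y p := by
  simpa using hY.map_add_eq_mul_mul hA 1 (θ := p) (fun t => by simp [hper]) t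

end IsFundamentalSolution

end FundamentalSolution

theorem stmt6_general (N : ℕ)
    (A : ℝ → (EuclideanSpace ℝ (Fin N) →L[ℝ] EuclideanSpace ℝ (Fin N)))
    (hA : Continuous A)
    (p : ℝ) (hper : ∀ t : ℝ, A (t + p) = A t)
    (h : EuclideanSpace ℝ (Fin N) ≃L[ℝ] EuclideanSpace ℝ (Fin N))
    (m n : ℕ) (hm : 1 ≤ m) (hmn : m ≤ n)
    (θ : ℝ) (hθ : θ = ((m : ℝ) / (n : ℝ)) * p)
    (hsym : ∀ (t : ℝ) (v : EuclideanSpace ℝ (Fin N)), h (A t v) = A (t + θ) (h v))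
    (Y : ℝ → (EuclideanSpace ℝ (Fin N) →L[ℝ] EuclideanSpace ℝ (Fin N)))
    (hY0 : Y 0 = ContinuousLinearMap.id ℝ (EuclideanSpace ℝ (Fin N)))
    (hYd : ∀ t : ℝ, HasDerivAt Y ((A t).comp (Y t)) t) :
    (Y p) ^ m =
      ((h : EuclideanSpace ℝ (Fin N) →L[ℝ] EuclideanSpace ℝ (Fin N))) ^ n *
        (((h.symm : EuclideanSpace ℝ (Fin N) →L[ℝ] EuclideanSpace ℝ (Fin N))).comp
          (Y θ)) ^ n := by
  have hY : IsFundamentalSolution A Y := ⟨hY0, hYd⟩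
  let u := (ContinuousLinearEquiv.unitsEquiv ℝ _).symm h
  have hsym' : ∀ t, ↑u * A t = A (t + θ) * ↑u := fun t => ContinuousLinearMap.ext (hsym t)
  have hmp : (m : ℝ) * p = n * θ := by
    have : (n : ℝ) ≠ 0 := by norm_cast; omega
    rw [hθ]; field_simp
  calc Y p ^ m = Y (m * p) := (map_natCast_mul_eq_pow hY.1 (hY.map_add_period hA hper) m).symm
    _ = Y (n * θ) := by rw [hmp]
    _ = ↑u ^ n * (↑u⁻¹ * Y θ) ^ n :=
        map_natCast_mul_eq_pow_mul_pow hY.1 (hY.map_add_eq_mul_mul hA u hsym') n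

/-- Let `Y` be the fundamental solution (`Y(0)=I`) of `ẏ = A(t)y`
with `A` continuous, `p`-periodic, and `h A(t) = A(t+θ) h` for an orthogonal
linear map `h`, where `θ = (m/n)p` with `1 ≤ m ≤ n`. With the twisted monodromy
operator `Y_h = h⁻¹ Y(θ)`, the monodromy operator satisfies
`Y(p)^m = h^n Y_h^n`. -/
theorem stmt6 (N : ℕ)
    (A : ℝ → (EuclideanSpace ℝ (Fin N) →L[ℝ] EuclideanSpace ℝ (Fin N)))
    (hA : Continuous A)
    (p : ℝ) (hp : 0 < p) (hper : ∀ t : ℝ, A (t + p) = A t)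
    (h : EuclideanSpace ℝ (Fin N) ≃L[ℝ] EuclideanSpace ℝ (Fin N))
    (horth : ∀ v, ‖h v‖ = ‖v‖)
    (m n : ℕ) (hm : 1 ≤ m) (hmn : m ≤ n)
    (θ : ℝ) (hθ : θ = ((m : ℝ) / (n : ℝ)) * p)
    (hsym : ∀ (t : ℝ) (v : EuclideanSpace ℝ (Fin N)), h (A t v) = A (t + θ) (h v))
    (Y : ℝ → (EuclideanSpace ℝ (Fin N) →L[ℝ] EuclideanSpace ℝ (Fin N)))
    (hY0 : Y 0 = ContinuousLinearMap.id ℝ (EuclideanSpace ℝ (Fin N)))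
    (hYd : ∀ t : ℝ, HasDerivAt Y ((A t).comp (Y t)) t) :
    (Y p) ^ m =
      ((h : EuclideanSpace ℝ (Fin N) →L[ℝ] EuclideanSpace ℝ (Fin N))) ^ n *
        (((h.symm : EuclideanSpace ℝ (Fin N) →L[ℝ] EuclideanSpace ℝ (Fin N))).comp
          (Y θ)) ^ n :=
  stmt6_general N A hA p hper h m n hm hmn θ hθ hsym Y hY0 hYd
end

section
/- Let b < 0 be a real number. Then z = 1 is a simple zero of the entire function F(z) = 1 - z·e^{b(1-z)} (i.e. F(1) = 0 and F'(1) ≠ 0), and every other zero μ of F satisfies |μ| > 1. -/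
/-!
Taking norms in `μ e^{b(1-μ)} = 1` gives `‖μ‖ = e^{b(Re μ - 1)}`. If `‖μ‖ ≤ 1` then `Re μ ≤ 1`,
so for `b < 0` the right-hand side is at least `1`; hence `‖μ‖ = 1` and `Re μ = 1`, which forces
`μ = 1`.
-/

open Complex

theorem hasDerivAt_one_sub_mul_exp_mul_one_sub (b : ℂ) :
    HasDerivAt (fun z : ℂ => 1 - z * exp (b * (1 - z))) (b - 1) 1 := by
  have hexp : HasDerivAt (fun z : ℂ => exp (b * (1 - z))) (exp (b * (1 - 1)) * (b * -1)) 1 :=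
    (((hasDerivAt_id (1 : ℂ)).const_sub 1).const_mul b).cexp
  refine (((hasDerivAt_id' (1 : ℂ)).mul hexp).const_sub 1).congr_deriv ?_
  simp only [sub_self, mul_zero, exp_zero]
  ring

theorem norm_eq_exp_of_mul_exp_mul_one_sub_eq_one (b : ℝ) {μ : ℂ}
    (h : μ * exp (b * (1 - μ)) = 1) : ‖μ‖ = Real.exp (b * (μ.re - 1)) := by
  have hnorm := congrArg norm h
  rw [norm_mul, norm_exp, norm_one] at hnorm
  have hre : ((b : ℂ) * (1 - μ)).re = -(b * (μ.re - 1)) := by simp; ring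
  rw [hre, Real.exp_neg] at hnorm
  field_simp at hnorm
  exact hnorm

theorem eq_one_of_re_eq_one_of_norm_eq_one {μ : ℂ} (hre : μ.re = 1) (hnorm : ‖μ‖ = 1) : μ = 1 := by
  have him : μ.im = 0 := abs_re_eq_norm.mp (by rw [hre, hnorm, abs_one])
  exact Complex.ext hre him

theorem one_lt_norm_of_mul_exp_mul_one_sub_eq_one {b : ℝ} (hb : b < 0) {μ : ℂ}
    (h : μ * exp (b * (1 - μ)) = 1) (hμ : μ ≠ 1) : 1 < ‖μ‖ := by
  by_contra! hle
  have hnorm := norm_eq_exp_of_mul_exp_mul_one_sub_eq_one b h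
  have hre_le : μ.re ≤ 1 := (re_le_norm μ).trans hle
  have hexp_ge : 1 ≤ Real.exp (b * (μ.re - 1)) :=
    Real.one_le_exp (mul_nonneg_of_nonpos_of_nonpos hb.le (by linarith))
  have hnorm_one : ‖μ‖ = 1 := le_antisymm hle (hnorm ▸ hexp_ge)
  have hexponent : b * (μ.re - 1) = 0 := Real.exp_eq_one_iff _ |>.mp (hnorm ▸ hnorm_one)
  have hre : μ.re = 1 := sub_eq_zero.mp ((mul_eq_zero.mp hexponent).resolve_left hb.ne)
  exact hμ (eq_one_of_re_eq_one_of_norm_eq_one hre hnorm_one)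

/-- For real `b < 0`, `z = 1` is a simple zero of
`F(z) = 1 - z e^{b(1-z)}` (i.e. `F(1) = 0` and `F'(1) ≠ 0`), and every other
zero `μ` of `F` satisfies `|μ| > 1`. -/
theorem stmt10 (b : ℝ) (hb : b < 0) :
    (1 : ℂ) - 1 * Complex.exp ((b : ℂ) * (1 - 1)) = 0 ∧
    deriv (fun z : ℂ => 1 - z * Complex.exp ((b : ℂ) * (1 - z))) 1 ≠ 0 ∧
    ∀ μ : ℂ, 1 - μ * Complex.exp ((b : ℂ) * (1 - μ)) = 0 → μ ≠ 1 →
      1 < ‖μ‖ := by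
  refine ⟨by simp, ?_, fun μ hμ hne => ?_⟩
  · rw [(hasDerivAt_one_sub_mul_exp_mul_one_sub b).deriv, sub_ne_zero]
    exact_mod_cast (hb.trans one_pos).ne
  · exact one_lt_norm_of_mul_exp_mul_one_sub_eq_one hb (sub_eq_zero.mp hμ).symm hne
end

section
/- Let μ* ∈ ℂ with |μ*| < 1 and let b < 0 be real. Then every solution μ ∈ ℂ of the equation 1 - μ*·z·e^{b(1-z)} = 0 satisfies |μ| ≥ 1. Moreover, every such solution satisfies |μ| > 1. -/
/-!
On the closed unit disc `Re (1 - z) ≥ 0`, so `|e^{b(1-z)}| ≤ 1` for `b ≤ 0`; hence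
`|μ* z e^{b(1-z)}| ≤ |μ*| < 1` there, and the equation `μ* z e^{b(1-z)} = 1` has no solution
with `|z| ≤ 1`.
-/

open Complex

theorem Complex.norm_exp_ofReal_mul_one_sub_le_one {b : ℝ} {z : ℂ} (hb : b ≤ 0) (hz : z.re ≤ 1) :
    ‖exp ((b : ℂ) * (1 - z))‖ ≤ 1 := by
  rw [norm_exp, Real.exp_le_one_iff]
  simpa using mul_nonpos_of_nonpos_of_nonneg hb (sub_nonneg.mpr hz)

theorem Complex.norm_mul_mul_exp_lt_one {c z : ℂ} {b : ℝ} (hc : ‖c‖ < 1) (hb : b ≤ 0)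
    (hz : ‖z‖ ≤ 1) : ‖c * z * exp ((b : ℂ) * (1 - z))‖ < 1 := by
  have hexp := norm_exp_ofReal_mul_one_sub_le_one hb ((re_le_norm z).trans hz)
  calc ‖c * z * exp ((b : ℂ) * (1 - z))‖ = ‖c‖ * ‖z‖ * ‖exp ((b : ℂ) * (1 - z))‖ := by
        rw [norm_mul, norm_mul]
    _ ≤ ‖c‖ * 1 * 1 := by gcongr
    _ < 1 := by simpa using hc

/-- For `μ* ∈ ℂ` with `|μ*| < 1` and real `b < 0`, every solution
`μ` of `1 - μ* μ e^{b(1-μ)} = 0` satisfies `|μ| ≥ 1`, and moreover `|μ| > 1`. -/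
theorem stmt11 (μs : ℂ) (hμs : ‖μs‖ < 1) (b : ℝ) (hb : b < 0) :
    ∀ μ : ℂ, 1 - μs * μ * Complex.exp ((b : ℂ) * (1 - μ)) = 0 →
      1 ≤ ‖μ‖ ∧ 1 < ‖μ‖ := by
  intro μ hμ
  have h_one : μs * μ * exp ((b : ℂ) * (1 - μ)) = 1 := (sub_eq_zero.mp hμ).symm
  have h_gt : 1 < ‖μ‖ := by
    by_contra! h_le
    simpa [h_one] using norm_mul_mul_exp_lt_one hμs hb.le h_le
  exact ⟨h_gt.le, h_gt⟩
end
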